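/- Let G be an H-saturated graph, let x* be a vertex of minimum degree in G, and let B = N_G(x*). Then for every vertex y ∈ V(G) \ (B ∪ {x*}), we have 2·d_B(y) + d_{V(G)\B}(y) ≥ wt(H) − 1, where d_S(y) denotes the number of neighbors of y lying in S. -/
import Mathlib


open SimpleGraph

/-- `H` has a copy in `G`: an injective graph homomorphism (i.e. a subgraph isomorphic to `H`). -/
def hasCopy {α β : Type*} (H : SimpleGraph α) (G : SimpleGraph β) : Prop :=
  ∃ f : H →g G, Function.Injective f

/-- `G` is `H`-saturated: `H`-free, and adding any missing edge creates a copy of `H`. -/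
def isSat {α β : Type*} (H : SimpleGraph α) (G : SimpleGraph β) : Prop :=
  ¬ hasCopy H G ∧ ∀ x y : β, x ≠ y → ¬ G.Adj x y →
    hasCopy H (G ⊔ SimpleGraph.fromEdgeSet {s(x, y)})

/-- The weight of an edge `uv`: with `deg u ≤ deg v`,
`wt(uv) = 2|N(u) ∩ N(v)| + |N(v) \ N(u)|`. -/
noncomputable def edgeWt {α : Type*} (H : SimpleGraph α) (u v : α) : ℕ :=
  if (H.neighborSet u).ncard ≤ (H.neighborSet v).ncard then
    2 * (H.neighborSet u ∩ H.neighborSet v).ncard + ((H.neighborSet v) \ (H.neighborSet u)).ncard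
  else
    2 * (H.neighborSet u ∩ H.neighborSet v).ncard + ((H.neighborSet u) \ (H.neighborSet v)).ncard

/-- The weight of a graph: the minimum weight of an edge. -/
noncomputable def graphWt {α : Type*} (H : SimpleGraph α) : ℕ :=
  sInf {w | ∃ u v, H.Adj u v ∧ w = edgeWt H u v}

/-- The saturation number: minimum number of edges of an `H`-saturated graph on `n` vertices. -/
noncomputable def satNum {α : Type*} (H : SimpleGraph α) (n : ℕ) : ℕ :=
  sInf {m | ∃ G : SimpleGraph (Fin n), isSat H G ∧ Nat.card G.edgeSet = m}

/-- The graph obtained from `H` by adding a dominating vertex (`none`). -/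
def addDom {α : Type*} (H : SimpleGraph α) : SimpleGraph (Option α) :=
  SimpleGraph.fromRel (fun x y => x = none ∨ ∃ u v, x = some u ∧ y = some v ∧ H.Adj u v)


lemma edgeWt_eq {α : Type*} [Fintype α] (H : SimpleGraph α) (u v : α) :
    edgeWt H u v = (H.neighborSet u ∩ H.neighborSet v).ncard
      + max (H.neighborSet u).ncard (H.neighborSet v).ncard := by
  have h1 : ((H.neighborSet v) \ (H.neighborSet u)).ncard
      = (H.neighborSet v).ncard - (H.neighborSet u ∩ H.neighborSet v).ncard := by
    rw [← Set.diff_inter_self_eq_diff]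
    exact Set.ncard_diff Set.inter_subset_right (Set.toFinite _)
  have h2 : ((H.neighborSet u) \ (H.neighborSet v)).ncard
      = (H.neighborSet u).ncard - (H.neighborSet u ∩ H.neighborSet v).ncard := by
    rw [← Set.diff_self_inter]
    exact Set.ncard_diff Set.inter_subset_left (Set.toFinite _)
  have h3 : (H.neighborSet u ∩ H.neighborSet v).ncard ≤ (H.neighborSet u).ncard :=
    Set.ncard_le_ncard Set.inter_subset_left (Set.toFinite _)
  have h4 : (H.neighborSet u ∩ H.neighborSet v).ncard ≤ (H.neighborSet v).ncard :=
    Set.ncard_le_ncard Set.inter_subset_right (Set.toFinite _)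
  unfold edgeWt
  split <;> rename_i h
  · rw [h1, max_eq_right h]; omega
  · rw [h2, max_eq_left (le_of_not_ge h)]; omega

/-- If `x*` has minimum degree in the `H`-saturated graph `G`, `B = N(x*)`, and
`delta(G) <= wt(H) - 2`, then every vertex `y` outside `B ∪ {x*}` satisfies
`2 d_B(y) + d_{V∖B}(y) >= wt(H) - 1`. -/
theorem stmt2 {α β : Type*} [Fintype α] [Fintype β] (H : SimpleGraph α) (G : SimpleGraph β)
    (hE : ∃ u v, H.Adj u v) (hsat : isSat H G) (xstar : β)
    (hmin : ∀ v : β, (G.neighborSet xstar).ncard ≤ (G.neighborSet v).ncard)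
    (hdel : (G.neighborSet xstar).ncard ≤ graphWt H - 2) :
    ∀ y : β, y ≠ xstar → y ∉ G.neighborSet xstar →
      graphWt H - 1 ≤ 2 * (G.neighborSet y ∩ G.neighborSet xstar).ncard +
        ((G.neighborSet y) \ (G.neighborSet xstar)).ncard := by
  intro y hy hyB
  have hnadj : ¬ G.Adj y xstar := fun h => hyB h.symm
  obtain ⟨f, hfinj⟩ := hsat.2 y xstar hy hnadj
  -- adjacency in G' off the new edge is adjacency in G
  have key : ∀ p q : β, (G ⊔ SimpleGraph.fromEdgeSet {s(y, xstar)}).Adj p q → ¬ (p = y ∧ q = xstar) → ¬ (p = xstar ∧ q = y) → G.Adj p q := by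
    intro p q hpq h1 h2
    rcases hpq with h | h
    · exact h
    · rw [fromEdgeSet_adj] at h
      obtain ⟨hmem, hne⟩ := h
      simp only [Set.mem_singleton_iff, Sym2.eq_iff] at hmem
      tauto
  -- the copy uses the new edge
  obtain ⟨a, b, hab, hfa, hfb⟩ : ∃ a b, H.Adj a b ∧ f a = y ∧ f b = xstar := by
    by_contra hno
    push_neg at hno
    refine hsat.1 ⟨⟨f, ?_⟩, hfinj⟩
    intro p q hpq
    refine key _ _ (f.map_adj hpq) ?_ ?_
    · exact fun ⟨h1, h2⟩ => hno p q hpq h1 h2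
    · exact fun ⟨h1, h2⟩ => hno q p hpq.symm h2 h1
  have hane : a ≠ b := hab.ne
  -- images of vertices ≠ a, b are ≠ y, xstar
  have himg : ∀ w, w ≠ a → f w ≠ y := fun w hw h => hw (hfinj (h.trans hfa.symm))
  have himg' : ∀ w, w ≠ b → f w ≠ xstar := fun w hw h => hw (hfinj (h.trans hfb.symm))
  -- common neighbors
  have hC : (H.neighborSet a ∩ H.neighborSet b).ncard
      ≤ (G.neighborSet y ∩ G.neighborSet xstar).ncard := by
    refine Set.ncard_le_ncard_of_injOn f ?_ (hfinj.injOn) (Set.toFinite _)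
    rintro w ⟨hwa, hwb⟩
    have hwna : w ≠ a := fun h => H.irrefl (h ▸ hwa)
    have hwnb : w ≠ b := fun h => H.irrefl (h ▸ hwb)
    have h1 : (G ⊔ SimpleGraph.fromEdgeSet {s(y, xstar)}).Adj y (f w) := by have := f.map_adj hwa; rwa [hfa] at this
    have h2 : (G ⊔ SimpleGraph.fromEdgeSet {s(y, xstar)}).Adj xstar (f w) := by have := f.map_adj hwb; rwa [hfb] at this
    constructor
    · exact key y (f w) h1 (fun ⟨_, h⟩ => himg' w hwnb h) (fun ⟨h, _⟩ => hy h)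
    · exact key xstar (f w) h2 (fun ⟨h, _⟩ => hy h.symm) (fun ⟨_, h⟩ => himg w hwna h)
  -- deg a - 1 ≤ deg_G y
  have hA : ((H.neighborSet a) \ {b}).ncard ≤ (G.neighborSet y).ncard := by
    refine Set.ncard_le_ncard_of_injOn f ?_ (hfinj.injOn) (Set.toFinite _)
    rintro w ⟨hwa, hwb⟩
    simp only [Set.mem_singleton_iff] at hwb
    have hwna : w ≠ a := fun h => H.irrefl (h ▸ hwa)
    have h1 : (G ⊔ SimpleGraph.fromEdgeSet {s(y, xstar)}).Adj y (f w) := by have := f.map_adj hwa; rwa [hfa] at this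
    exact key y (f w) h1 (fun ⟨_, h⟩ => himg' w hwb h) (fun ⟨h, _⟩ => hy h)
  -- deg b - 1 ≤ deg_G xstar
  have hB : ((H.neighborSet b) \ {a}).ncard ≤ (G.neighborSet xstar).ncard := by
    refine Set.ncard_le_ncard_of_injOn f ?_ (hfinj.injOn) (Set.toFinite _)
    rintro w ⟨hwb, hwa⟩
    simp only [Set.mem_singleton_iff] at hwa
    have hwnb : w ≠ b := fun h => H.irrefl (h ▸ hwb)
    have h2 : (G ⊔ SimpleGraph.fromEdgeSet {s(y, xstar)}).Adj xstar (f w) := by have := f.map_adj hwb; rwa [hfb] at this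
    exact key xstar (f w) h2 (fun ⟨h, _⟩ => hy h.symm) (fun ⟨_, h⟩ => himg w hwa h)
  have hA' : (H.neighborSet a).ncard ≤ ((H.neighborSet a) \ {b}).ncard + 1 := by
    have : H.neighborSet a ⊆ ((H.neighborSet a) \ {b}) ∪ {b} := by
      intro w hw; by_cases h : w = b <;> simp [h, hw]
    calc (H.neighborSet a).ncard ≤ (((H.neighborSet a) \ {b}) ∪ {b}).ncard :=
          Set.ncard_le_ncard this (Set.toFinite _)
      _ ≤ ((H.neighborSet a) \ {b}).ncard + ({b} : Set α).ncard := Set.ncard_union_le _ _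
      _ = ((H.neighborSet a) \ {b}).ncard + 1 := by rw [Set.ncard_singleton]
  have hB' : (H.neighborSet b).ncard ≤ ((H.neighborSet b) \ {a}).ncard + 1 := by
    have : H.neighborSet b ⊆ ((H.neighborSet b) \ {a}) ∪ {a} := by
      intro w hw; by_cases h : w = a <;> simp [h, hw]
    calc (H.neighborSet b).ncard ≤ (((H.neighborSet b) \ {a}) ∪ {a}).ncard :=
          Set.ncard_le_ncard this (Set.toFinite _)
      _ ≤ ((H.neighborSet b) \ {a}).ncard + ({a} : Set α).ncard := Set.ncard_union_le _ _
      _ = ((H.neighborSet b) \ {a}).ncard + 1 := by rw [Set.ncard_singleton]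
  have hwtle : graphWt H ≤ edgeWt H a b := Nat.sInf_le ⟨a, b, hab, rfl⟩
  rw [edgeWt_eq] at hwtle
  have hdeg : (G.neighborSet xstar).ncard ≤ (G.neighborSet y).ncard := hmin y
  have hpart : (G.neighborSet y ∩ G.neighborSet xstar).ncard
      + ((G.neighborSet y) \ (G.neighborSet xstar)).ncard = (G.neighborSet y).ncard :=
    Set.ncard_inter_add_ncard_diff_eq_ncard _ _ (Set.toFinite _)
  have hmax : max (H.neighborSet a).ncard (H.neighborSet b).ncard
      ≤ (G.neighborSet y).ncard + 1 := max_le (by omega) (by omega)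
  omega
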